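/- arXiv:0808.0753 — 2 statements merged into one kernel-verified Lean document; each statement's English description precedes it below -/
import Mathlib

section
/- The run-length encoding of the binary digits of a positive natural number, together with the convention that the most significant bit is 1 and runs alternate, yields a bijection between positive natural numbers and nonempty lists of natural numbers (each run length recorded minus 1): rle2nat (nat2rle n) = n for all n, and nat2rle (rle2nat ls) = ls for all lists ls. -/
def bits2rle : List Bool → List ℕ
  | [] => []
  | [_] => [0]
  | x :: y :: xs =>
    if x = y then
      match bits2rle (y :: xs) with
      | c :: cs => (c + 1) :: cs
      | [] => []
    else 0 :: bits2rle (y :: xs)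

def rle2bits : List ℕ → List Bool
  | [] => []
  | n :: ns =>
    let xs := rle2bits ns
    List.replicate (n + 1) (match xs with | [] => true | b :: _ => !b) ++ xs

def fromBits : List Bool → ℕ
  | [] => 0
  | b :: bs => (if b then 1 else 0) + 2 * fromBits bs

def nat2rle (n : ℕ) : List ℕ := bits2rle n.bits

def rle2nat (ls : List ℕ) : ℕ := fromBits (rle2bits ls)

/-!
Both maps factor through the little-endian bit list: `Nat.bits` and `fromBits` are inverse
bijections between positive numbers and bit lists ending in `true`, and `bits2rle`, `rle2bits`
are inverse bijections between such bit lists and nonempty lists. The second pair inverts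
each other because `rle2bits` gives consecutive runs opposite colours, so that `bits2rle` reads
every run back as one maximal run.
-/

lemma fromBits_cons (b : Bool) (bs : List Bool) :
    fromBits (b :: bs) = Nat.bit b (fromBits bs) := by
  cases b <;> simp [fromBits, Nat.bit, two_mul, add_comm]

lemma fromBits_bits (n : ℕ) : fromBits n.bits = n := by
  induction n using Nat.binaryRec' with
  | zero => rfl
  | bit b n h ih => rw [Nat.bits_append_bit _ _ h, fromBits_cons, ih]

lemma getLast?_bits {n : ℕ} (hn : n ≠ 0) : n.bits.getLast? = some true := by
  induction n using Nat.binaryRec' with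
  | zero => contradiction
  | bit b n h ih =>
    rw [Nat.bits_append_bit _ _ h, List.getLast?_cons]
    rcases eq_or_ne n 0 with rfl | hn0
    · simp [h rfl]
    · simp [ih hn0]

lemma bits_fromBits {bs : List Bool} (h : bs.getLast? = some true) :
    (fromBits bs).bits = bs := by
  induction bs with
  | nil => simp at h
  | cons b bs ih =>
    rw [fromBits_cons]
    rcases bs with _ | ⟨c, cs⟩
    · obtain rfl : b = true := by simpa using h
      rfl
    · rw [List.getLast?_cons_cons] at h
      have hbits := ih h
      rw [Nat.bits_append_bit _ _ fun h0 => by simp [h0] at hbits, hbits]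

lemma rle2bits_cons_of_eq_cons {l : List ℕ} {b : Bool} {bs : List Bool}
    (h : rle2bits l = b :: bs) (k : ℕ) :
    rle2bits (k :: l) = List.replicate (k + 1) (!b) ++ b :: bs := by
  simp [rle2bits, h]

lemma rle2bits_succ_cons {k : ℕ} {l : List ℕ} {b : Bool} {bs : List Bool}
    (h : rle2bits (k :: l) = b :: bs) : rle2bits ((k + 1) :: l) = b :: b :: bs := by
  simp only [rle2bits, List.replicate_succ, List.cons_append] at h ⊢
  obtain ⟨rfl, rfl⟩ := List.cons_eq_cons.mp h
  rfl

lemma getLast?_rle2bits {l : List ℕ} (hl : l ≠ []) : (rle2bits l).getLast? = some true := by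
  induction l with
  | nil => contradiction
  | cons k l ih =>
    simp only [rle2bits, List.getLast?_append]
    rcases l with _ | ⟨m, ms⟩
    · simp [rle2bits, List.getLast?_replicate]
    · simp [ih (List.cons_ne_nil m ms)]

lemma bits2rle_replicate_append (k : ℕ) (c : Bool) {xs : List Bool} (hxs : xs.head? ≠ some c) :
    bits2rle (List.replicate (k + 1) c ++ xs) = k :: bits2rle xs := by
  induction k with
  | zero =>
    rcases xs with _ | ⟨y, ys⟩
    · rfl
    · have hyc : c ≠ y := fun hcy => hxs (by simp [hcy])
      simp [bits2rle, hyc]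
  | succ k ih =>
    rw [List.replicate_succ, List.cons_append, List.replicate_succ, List.cons_append, bits2rle,
      if_pos rfl, ← List.cons_append, ← List.replicate_succ, ih]

lemma bits2rle_rle2bits (l : List ℕ) : bits2rle (rle2bits l) = l := by
  induction l with
  | nil => rfl
  | cons k l ih =>
    simp only [rle2bits]
    rw [bits2rle_replicate_append, ih]
    cases rle2bits l <;> simp

lemma rle2bits_bits2rle {bs : List Bool} (h : bs.getLast? = some true) :
    rle2bits (bits2rle bs) = bs := by
  induction bs with
  | nil => simp at h
  | cons x bs ih =>
    rcases bs with _ | ⟨y, ys⟩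
    · obtain rfl : x = true := by simpa using h
      rfl
    · rw [List.getLast?_cons_cons] at h
      have ih := ih h
      rw [bits2rle]
      split_ifs with hxy
      · subst hxy
        rcases hrle : bits2rle (x :: ys) with _ | ⟨c, cs⟩
        · simp [hrle, rle2bits] at ih
        · rw [hrle] at ih
          exact rle2bits_succ_cons ih
      · rw [rle2bits_cons_of_eq_cons ih]
        cases x <;> cases y <;> simp_all

theorem rle_bijection :
    (∀ n : ℕ, 1 ≤ n → rle2nat (nat2rle n) = n) ∧
    (∀ ls : List ℕ, ls ≠ [] → nat2rle (rle2nat ls) = ls) := by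
  constructor
  · intro n hn
    rw [rle2nat, nat2rle, rle2bits_bits2rle (getLast?_bits (by omega)), fromBits_bits]
  · intro ls hls
    rw [nat2rle, rle2nat, bits_fromBits (getLast?_rle2bits hls), bits2rle_rle2bits]
end

section
/- Let f : ℕ → List ℕ be a bijection between ℕ (restricted to n ≥ u) and lists of natural numbers such that every element of f(n) is strictly less than n. Then the recursively defined map unrank : ℕ → T, where T is the type of rose trees with atoms in {0,...,u-1}, given by unrank(n) = Atom n if n < u and unrank(n) = Forest (map unrank (f(n-u))) otherwise, is a well-defined bijection from ℕ to T, with inverse rank defined by rank(Atom n) = n and rank(Forest ts) = u + g(map rank ts) where g is the inverse of f. -/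
/-! `unrank` terminates because every entry of `f (n - u)` is smaller than `n`. Then
`rank ∘ unrank = id` by strong induction on `n` (using `g ∘ f = id`) and
`unrank ∘ rank = id` by induction on trees (using `f ∘ g = id`), so `unrank` is a bijection. -/

inductive T (u : ℕ) where
  | A : Fin u → T u
  | F : List (T u) → T u

namespace T

variable {u : ℕ}

def rank (g : List ℕ → ℕ) : T u → ℕ
  | A a => a.val
  | F ts => u + g (ts.map (rank g))

def unrank (f : ℕ → List ℕ) (hlt : ∀ n : ℕ, u ≤ n → ∀ m ∈ f (n - u), m < n) (n : ℕ) : T u :=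
  if h : n < u then A ⟨n, h⟩ else F ((f (n - u)).attach.map fun m => unrank f hlt m.1)
termination_by n
decreasing_by exact hlt n (Nat.le_of_not_lt h) m m.2

section unrank

variable {f : ℕ → List ℕ} {hlt : ∀ n : ℕ, u ≤ n → ∀ m ∈ f (n - u), m < n}

theorem unrank_of_lt {n : ℕ} (h : n < u) : unrank f hlt n = A ⟨n, h⟩ := by
  rw [unrank, dif_pos h]

theorem unrank_of_le {n : ℕ} (h : u ≤ n) :
    unrank f hlt n = F ((f (n - u)).map (unrank f hlt)) := by
  rw [unrank, dif_neg (Nat.not_lt.mpr h), List.attach_map_val]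

theorem rank_unrank {g : List ℕ → ℕ} (hgf : ∀ n, g (f n) = n) (n : ℕ) :
    rank g (unrank f hlt n) = n := by
  induction n using Nat.strong_induction_on with
  | _ n ih =>
    rcases lt_or_ge n u with h | h
    · rw [unrank_of_lt h, rank]
    · have hchildren : (f (n - u)).map (rank g ∘ unrank f hlt) = f (n - u) :=
        (List.map_congr_left fun m hm => ih m (hlt n h m hm)).trans (List.map_id _)
      rw [unrank_of_le h, rank, List.map_map, hchildren, hgf, Nat.add_sub_cancel' h]

theorem unrank_rank {g : List ℕ → ℕ} (hfg : ∀ l, f (g l) = l) :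
    ∀ t : T u, unrank f hlt (rank g t) = t
  | A a => by rw [rank, unrank_of_lt a.isLt]
  | F ts => by
    rw [rank, unrank_of_le (Nat.le_add_right u _), Nat.add_sub_cancel_left, hfg, List.map_map]
    congr 1
    exact (List.map_congr_left fun t _ => unrank_rank hfg t).trans (List.map_id ts)

end unrank
end T

theorem unrank_rank_bijective (u : ℕ) (f : ℕ → List ℕ) (g : List ℕ → ℕ)
    (hfg : ∀ l : List ℕ, f (g l) = l) (hgf : ∀ n : ℕ, g (f n) = n)
    (hlt : ∀ n : ℕ, u ≤ n → ∀ m ∈ f (n - u), m < n) :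
    ∃ (unrank : ℕ → T u) (rank : T u → ℕ),
      (∀ n : ℕ, ∀ h : n < u, unrank n = T.A ⟨n, h⟩) ∧
      (∀ n : ℕ, u ≤ n → unrank n = T.F ((f (n - u)).map unrank)) ∧
      (∀ a : Fin u, rank (T.A a) = a.val) ∧
      (∀ ts : List (T u), rank (T.F ts) = u + g (ts.map rank)) ∧
      Function.Bijective unrank ∧
      (∀ n : ℕ, rank (unrank n) = n) ∧
      (∀ t : T u, unrank (rank t) = t) :=
  have hru := T.rank_unrank (hlt := hlt) hgf
  have hur := T.unrank_rank (hlt := hlt) hfg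
  ⟨T.unrank f hlt, T.rank g, fun _ => T.unrank_of_lt, fun _ => T.unrank_of_le,
    fun _ => T.rank.eq_1 g _, fun _ => T.rank.eq_2 g _,
    Function.bijective_iff_has_inverse.mpr ⟨T.rank g, hru, hur⟩, hru, hur⟩
end
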